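/- arXiv:1908.04160 — 7 statements merged into one kernel-verified Lean document; each statement's English description precedes it below -/
import Mathlib

section
/- For all real a, b, x and every natural number s, the s-th derivative of x ↦ exp(a x² + b x) equals H_s(2ax+b, a) · exp(a x² + b x), where H_s is the two-variable Hermite polynomial. -/
open Finset Real

noncomputable def hermite2 (n : ℕ) (x y : ℝ) : ℝ :=
  (n.factorial : ℝ) * ∑ r ∈ range (n / 2 + 1),
    x ^ (n - 2 * r) * y ^ r / ((n - 2 * r).factorial * r.factorial)

noncomputable def g (n r : ℕ) (x y : ℝ) : ℝ :=
  if 2 * r ≤ n then x ^ (n - 2 * r) * y ^ r / ((n - 2 * r).factorial * r.factorial) else 0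

lemma hermite2_eq (n : ℕ) (x y : ℝ) :
    hermite2 n x y = (n.factorial : ℝ) * ∑ r ∈ range (n + 1), g n r x y := by
  unfold hermite2
  congr 1
  rw [← Finset.sum_subset (Finset.range_subset_range.mpr (by omega : n / 2 + 1 ≤ n + 1))]
  · exact Finset.sum_congr rfl fun r hr => by
      rw [Finset.mem_range] at hr
      rw [g, if_pos (by omega)]
  · intro r hr hr'
    rw [Finset.mem_range] at hr hr'
    rw [g, if_neg (by omega)]

lemma hermite2_zero (x y : ℝ) : hermite2 0 x y = 1 := by simp [hermite2]

lemma hermite2_one (x y : ℝ) : hermite2 1 x y = x := by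
  simp [hermite2, Finset.sum_range_succ]

lemma fact_ne (k : ℕ) : ((k.factorial : ℝ)) ≠ 0 := by
  exact_mod_cast k.factorial_ne_zero

lemma term_rec (n r : ℕ) (x y : ℝ) :
    ((n+2).factorial : ℝ) * g (n+2) (r+1) x y
      = x * (((n+1).factorial : ℝ) * g (n+1) (r+1) x y)
        + 2*((n:ℝ)+1)*y*((n.factorial : ℝ) * g n r x y) := by
  rcases lt_trichotomy (2*r) n with h | h | h
  · rw [g, if_pos (by omega), g, if_pos (by omega), g, if_pos (by omega)]
    rw [show n + 2 - 2*(r+1) = n - 2*r by omega, show n + 1 - 2*(r+1) = n - 2*r - 1 by omega]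
    have F2 : (((n+2).factorial : ℝ)) = ((n:ℝ)+2)*((n:ℝ)+1)*(n.factorial : ℝ) := by
      rw [Nat.factorial_succ, Nat.factorial_succ]; push_cast; ring
    have F1 : (((n+1).factorial : ℝ)) = ((n:ℝ)+1)*(n.factorial : ℝ) := by
      rw [Nat.factorial_succ]; push_cast; ring
    have Fr : (((r+1).factorial : ℝ)) = ((r:ℝ)+1)*(r.factorial : ℝ) := by
      rw [Nat.factorial_succ]; push_cast; ring
    have Fk : (((n-2*r).factorial : ℝ)) = ((n:ℝ)-2*r)*(((n-2*r-1).factorial : ℝ)) := by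
      have := Nat.mul_factorial_pred (show n - 2*r ≠ 0 by omega)
      have h2 : (((n-2*r) * (n-2*r-1).factorial : ℕ) : ℝ) = ((n-2*r).factorial : ℝ) := by
        exact_mod_cast congrArg (Nat.cast : ℕ → ℝ) this
      push_cast [Nat.cast_sub (by omega : 2*r ≤ n)] at h2
      linarith [h2]
    have P1 : x ^ (n - 2*r) = x * x^(n-2*r-1) := by
      conv_lhs => rw [show n-2*r = (n-2*r-1)+1 by omega]
      rw [pow_succ]; ring
    rw [F2, F1, Fr, Fk, P1]
    generalize n - 2*r - 1 = k
    have d1 : (((n-2*r-1).factorial : ℝ)) ≠ 0 := fact_ne _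
    have d2 : ((r.factorial : ℝ)) ≠ 0 := fact_ne _
    have d3 : ((n:ℝ)-2*r) ≠ 0 := by
      have : (2*r : ℝ) < n := by exact_mod_cast h
      linarith
    have d4 : ((r:ℝ)+1) ≠ 0 := by positivity
    field_simp
    ring
  · rw [g, if_pos (by omega), g, if_neg (by omega), g, if_pos (by omega)]
    subst h
    rw [show 2*r + 2 - 2*(r+1) = 0 by omega, show 2*r - 2*r = 0 by omega]
    have F2 : (((2*r+2).factorial : ℝ)) = (2*(r:ℝ)+2)*(2*(r:ℝ)+1)*((2*r).factorial : ℝ) := by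
      rw [Nat.factorial_succ, Nat.factorial_succ]; push_cast; ring
    have Fr : (((r+1).factorial : ℝ)) = ((r:ℝ)+1)*(r.factorial : ℝ) := by
      rw [Nat.factorial_succ]; push_cast; ring
    rw [F2, Fr]
    have d2 : ((r.factorial : ℝ)) ≠ 0 := fact_ne _
    have d4 : ((r:ℝ)+1) ≠ 0 := by positivity
    field_simp
    push_cast; ring
  · rw [g, if_neg (by omega), g, if_neg (by omega), g, if_neg (by omega)]; ring

lemma hermite2_rec (n : ℕ) (x y : ℝ) :
    hermite2 (n+2) x y = x * hermite2 (n+1) x y + 2*((n:ℝ)+1)*y*hermite2 n x y := by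
  rw [hermite2_eq, hermite2_eq, hermite2_eq]
  have e3 : ∑ r ∈ range (n+2), g n r x y = ∑ r ∈ range (n+1), g n r x y := by
    rw [Finset.sum_range_succ, g, if_neg (by omega), add_zero]
  rw [← e3]
  have e2 : ∑ r ∈ range (n+2+1), g (n+2) r x y
      = g (n+2) 0 x y + ∑ r ∈ range (n+2), g (n+2) (r+1) x y := by
    rw [Finset.sum_range_succ']; ring
  have e1 : ∑ r ∈ range (n+1+1), g (n+1) r x y
      = g (n+1) 0 x y + ∑ r ∈ range (n+1), g (n+1) (r+1) x y := by
    rw [Finset.sum_range_succ']; ring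
  have e1' : ∑ r ∈ range (n+2), g (n+1) (r+1) x y = ∑ r ∈ range (n+1), g (n+1) (r+1) x y := by
    rw [Finset.sum_range_succ, g, if_neg (by omega), add_zero]
  rw [e2, e1, ← e1']
  have bdry : ((n+2).factorial : ℝ) * g (n+2) 0 x y
      = x * (((n+1).factorial : ℝ) * g (n+1) 0 x y) := by
    rw [g, if_pos (by omega), g, if_pos (by omega)]
    simp only [Nat.sub_zero, Nat.mul_zero, pow_zero, Nat.factorial_zero, Nat.cast_one, mul_one]
    field_simp
    rw [pow_succ]
    ring
  have main : ((n+2).factorial : ℝ) * ∑ r ∈ range (n+2), g (n+2) (r+1) x y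
      = x * (((n+1).factorial : ℝ) * ∑ r ∈ range (n+2), g (n+1) (r+1) x y)
        + 2*((n:ℝ)+1)*y*((n.factorial : ℝ) * ∑ r ∈ range (n+2), g n r x y) := by
    rw [Finset.mul_sum, Finset.mul_sum, Finset.mul_sum, Finset.mul_sum, Finset.mul_sum,
      ← Finset.sum_add_distrib]
    exact Finset.sum_congr rfl fun r _ => by linear_combination term_rec n r x y
  linear_combination main + bdry

lemma term_deriv (n r : ℕ) (y u : ℝ) :
    ((n+1).factorial : ℝ) * (if 2*r ≤ n+1 then
        (((n+1-2*r : ℕ)):ℝ) * u^(n+1-2*r-1) * y^r / (((n+1-2*r).factorial : ℝ) * r.factorial)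
      else 0)
    = ((n:ℝ)+1) * ((n.factorial : ℝ) * g n r u y) := by
  rcases lt_trichotomy (2*r) (n+1) with h | h | h
  · rw [if_pos (by omega), g, if_pos (by omega)]
    rw [show n + 1 - 2*r - 1 = n - 2*r by omega]
    have C : (((n+1-2*r : ℕ)):ℝ) = (n:ℝ)+1-2*r := by
      push_cast [Nat.cast_sub (by omega : 2*r ≤ n+1)]; ring
    have F1 : (((n+1).factorial : ℝ)) = ((n:ℝ)+1)*(n.factorial : ℝ) := by
      rw [Nat.factorial_succ]; push_cast; ring
    have Fk : (((n+1-2*r).factorial : ℝ)) = ((n:ℝ)+1-2*r)*(((n-2*r).factorial : ℝ)) := by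
      have h0 : 0 < n + 1 - 2*r := by omega
      have := Nat.mul_factorial_pred h0.ne'
      have h2 : (((n+1-2*r) * (n+1-2*r-1).factorial : ℕ) : ℝ) = ((n+1-2*r).factorial : ℝ) := by
        exact_mod_cast congrArg (Nat.cast : ℕ → ℝ) this
      rw [show n+1-2*r-1 = n-2*r by omega] at h2
      push_cast [Nat.cast_sub (by omega : 2*r ≤ n+1)] at h2
      linarith [h2]
    rw [C, F1, Fk]
    have d1 : (((n-2*r).factorial : ℝ)) ≠ 0 := fact_ne _
    have d2 : ((r.factorial : ℝ)) ≠ 0 := fact_ne _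
    have d3 : ((n:ℝ)+1-2*r) ≠ 0 := by
      have : (2*r : ℝ) < (n:ℝ)+1 := by exact_mod_cast h
      linarith
    field_simp
  · rw [if_pos (by omega), g, if_neg (by omega)]
    rw [show n + 1 - 2*r = 0 by omega]
    simp
  · rw [if_neg (by omega), g, if_neg (by omega)]
    ring

lemma hermite2_hasDerivAt (n : ℕ) (y u : ℝ) :
    HasDerivAt (fun x => hermite2 (n+1) x y) (((n:ℝ)+1) * hermite2 n u y) u := by
  have hfun : (fun x => hermite2 (n+1) x y)
      = fun x => ∑ r ∈ range (n+2), ((n+1).factorial : ℝ) * g (n+1) r x y := by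
    funext x; rw [hermite2_eq, Finset.mul_sum]
  rw [hfun]
  have hsum : HasDerivAt
      (fun x => ∑ r ∈ range (n+2), ((n+1).factorial : ℝ) * g (n+1) r x y)
      (∑ r ∈ range (n+2), ((n+1).factorial : ℝ) * (if 2*r ≤ n+1 then
        (((n+1-2*r : ℕ)):ℝ) * u^(n+1-2*r-1) * y^r / (((n+1-2*r).factorial : ℝ) * r.factorial)
      else 0)) u := by
    apply HasDerivAt.fun_sum
    intro r _
    by_cases h2 : 2*r ≤ n+1
    · simp only [g, if_pos h2]
      have h := ((hasDerivAt_pow (n+1-2*r) u).mul_const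
        (y^r / (((n+1-2*r).factorial : ℝ) * r.factorial))).const_mul (((n+1).factorial : ℝ))
      convert h using 2 with x
      · rfl
      · ring
      · ring
    · simp only [g, if_neg h2, mul_zero]
      exact hasDerivAt_const u 0
  have hval : (∑ r ∈ range (n+2), ((n+1).factorial : ℝ) * (if 2*r ≤ n+1 then
        (((n+1-2*r : ℕ)):ℝ) * u^(n+1-2*r-1) * y^r / (((n+1-2*r).factorial : ℝ) * r.factorial)
      else 0)) = ((n:ℝ)+1) * hermite2 n u y := by
    rw [Finset.sum_congr rfl (fun r _ => term_deriv n r y u)]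
    rw [hermite2_eq n u y, ← Finset.mul_sum, ← Finset.mul_sum]
    congr 2
    rw [Finset.sum_range_succ, g, if_neg (by omega), add_zero]
  rw [← hval]
  exact hsum

/-- d^s/dx^s exp(ax²+bx) = H_s(2ax+b, a) exp(ax²+bx). -/
theorem iteratedDeriv_exp_quadratic (a b : ℝ) (s : ℕ) (x : ℝ) :
    iteratedDeriv s (fun t : ℝ => Real.exp (a * t ^ 2 + b * t)) x =
      hermite2 s (2 * a * x + b) a * Real.exp (a * x ^ 2 + b * x) := by
  induction s generalizing x with
  | zero => simp [hermite2_zero]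
  | succ m ih =>
    rw [iteratedDeriv_succ]
    have hf : iteratedDeriv m (fun t : ℝ => Real.exp (a * t ^ 2 + b * t))
        = fun x => hermite2 m (2 * a * x + b) a * Real.exp (a * x ^ 2 + b * x) :=
      funext ih
    rw [hf]
    have hexp : HasDerivAt (fun t : ℝ => Real.exp (a * t ^ 2 + b * t))
        ((2 * a * x + b) * Real.exp (a * x ^ 2 + b * x)) x := by
      have h1 : HasDerivAt (fun t : ℝ => a * t ^ 2 + b * t) (2 * a * x + b) x := by
        have := ((hasDerivAt_pow 2 x).const_mul a).fun_add ((hasDerivAt_id x).const_mul b)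
        convert this using 1
        · rfl
        · rfl
        · rfl
        push_cast
        ring
      simpa [mul_comm] using h1.exp
    match m with
    | 0 =>
      have hH : HasDerivAt (fun t : ℝ => hermite2 0 (2 * a * t + b) a) 0 x := by
        have : (fun t : ℝ => hermite2 0 (2 * a * t + b) a) = fun _ => (1:ℝ) := by
          funext t; rw [hermite2_zero]
        rw [this]; exact hasDerivAt_const x 1
      rw [(hH.fun_mul hexp).deriv]
      rw [hermite2_zero, hermite2_one]
      ring
    | k + 1 =>
      have hinner : HasDerivAt (fun t : ℝ => 2 * a * t + b) (2 * a) x := by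
        have := ((hasDerivAt_id x).const_mul (2 * a)).add_const b
        simpa using this
      have hH : HasDerivAt (fun t : ℝ => hermite2 (k+1) (2 * a * t + b) a)
          ((((k:ℝ)+1) * hermite2 k (2 * a * x + b) a) * (2 * a)) x := by
        have houter := hermite2_hasDerivAt k a (2 * a * x + b)
        exact HasDerivAt.comp (h₂ := fun x => hermite2 (k+1) x a) x houter hinner
      rw [(hH.fun_mul hexp).deriv]
      rw [hermite2_rec k (2 * a * x + b) a]
      ring
end

section
/- The integral over (0,∞) of the Bessel function J_0(x) equals 1, i.e. ∫_0^∞ J_0(x) dx = 1. -/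
open Filter MeasureTheory Real intervalIntegral Set Finset

/-- Bessel function of the first kind of order zero. -/
noncomputable def besselJ0 (x : ℝ) : ℝ :=
  ∑' r : ℕ, (-1 : ℝ) ^ r * (x / 2) ^ (2 * r) / (r.factorial : ℝ) ^ 2


lemma wallis_prod (r : ℕ) : ∏ i ∈ Finset.range r, (2 * (i:ℝ) + 1) / (2 * i + 2)
    = ((2*r).factorial : ℝ) / (4 ^ r * ((r.factorial : ℝ))^2) := by
  induction r with
  | zero => simp
  | succ k ih =>
    rw [Finset.prod_range_succ, ih]
    have h1 : ((2*(k+1)).factorial : ℝ) = (2*k+2) * ((2*k+1) * ((2*k).factorial : ℝ)) := by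
      have : 2*(k+1) = (2*k+1) + 1 := by ring
      rw [this]
      push_cast [Nat.factorial_succ]
      ring
    have h2 : (((k+1).factorial : ℝ)) = (k+1) * (k.factorial : ℝ) := by
      push_cast [Nat.factorial_succ]; ring
    have hf : ((k.factorial : ℝ)) ≠ 0 := by positivity
    have h4 : (4:ℝ)^k ≠ 0 := by positivity
    rw [h1, h2]
    field_simp [h1, h2]
    push_cast
    ring

lemma integral_sin_pow_even' (r : ℕ) : (∫ θ in (0:ℝ)..π, Real.sin θ ^ (2*r))
    = π * ((2*r).factorial : ℝ) / (4 ^ r * ((r.factorial : ℝ))^2) := by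
  rw [integral_sin_pow_even, wallis_prod]; ring



lemma besselJ0_eq (x : ℝ) :
    besselJ0 x = (1/π) * ∫ θ in (0:ℝ)..π, Real.cos (x * Real.sin θ) := by
  rw [besselJ0]
  set μ := volume.restrict (Ioc (0:ℝ) π)
  set F : ℕ → ℝ → ℝ := fun r θ => (-1:ℝ)^r * (x * Real.sin θ)^(2*r) / ((2*r).factorial : ℝ)
  have hFcont : ∀ r, Continuous (F r) := by
    intro r; fun_prop
  have hFint : ∀ r, Integrable (F r) μ := fun r =>
    (((hFcont r).continuousOn.integrableOn_compact isCompact_Icc)).mono_set Ioc_subset_Icc_self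
  have hnorm : ∀ r, (∫ θ, ‖F r θ‖ ∂μ) ≤ π * |x|^(2*r) / ((2*r).factorial : ℝ) := by
    intro r
    have : ∀ θ, ‖F r θ‖ ≤ |x|^(2*r) / ((2*r).factorial : ℝ) := by
      intro θ
      simp only [F, norm_div, norm_mul, norm_pow, norm_neg, norm_one, one_pow, Real.norm_eq_abs]
      rw [one_mul, Nat.abs_cast, mul_pow]
      gcongr
      calc |x| ^ (2*r) * |Real.sin θ| ^ (2*r) ≤ |x| ^ (2*r) * 1 := by
            gcongr
            exact pow_le_one₀ (abs_nonneg _) (abs_sin_le_one θ)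
        _ = |x| ^ (2*r) := mul_one _
    calc (∫ θ, ‖F r θ‖ ∂μ) ≤ ∫ _θ, |x|^(2*r) / ((2*r).factorial : ℝ) ∂μ := by
          apply integral_mono_of_nonneg (Filter.Eventually.of_forall fun θ => norm_nonneg _)
            (integrable_const _) (Filter.Eventually.of_forall this)
      _ = (volume (Ioc (0:ℝ) π)).toReal * (|x|^(2*r) / ((2*r).factorial : ℝ)) := by
          simp [μ, MeasureTheory.integral_const, max_eq_left pi_pos.le, ENNReal.toReal_ofReal pi_pos.le]
      _ = π * |x|^(2*r) / ((2*r).factorial : ℝ) := by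
          rw [Real.volume_Ioc, sub_zero, ENNReal.toReal_ofReal pi_pos.le]
          ring
  have hsumm : Summable (fun r => ∫ θ, ‖F r θ‖ ∂μ) := by
    apply Summable.of_nonneg_of_le (fun r => integral_nonneg fun θ => norm_nonneg _) hnorm
    have h1 : Summable (fun n : ℕ => |x|^n / (n.factorial : ℝ)) := Real.summable_pow_div_factorial _
    have h2 : Summable (fun r : ℕ => |x|^(2*r) / ((2*r).factorial : ℝ)) :=
      h1.comp_injective (fun a b h => by omega)
    simpa [mul_div_assoc] using h2.mul_left π
  have hs := hasSum_integral_of_summable_integral_norm hFint hsumm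
  have hts : (∫ θ, (∑' r, F r θ) ∂μ) = ∫ θ in (0:ℝ)..π, Real.cos (x * Real.sin θ) := by
    rw [intervalIntegral.integral_of_le pi_pos.le]
    exact MeasureTheory.integral_congr_ae (Filter.Eventually.of_forall fun θ => (Real.cos_eq_tsum (x * Real.sin θ)).symm)
  rw [hts] at hs
  have hval : ∀ r, (∫ θ, F r θ ∂μ) = π * ((-1:ℝ)^r * (x / 2)^(2*r) / ((r.factorial:ℝ))^2) := by
    intro r
    have : (∫ θ, F r θ ∂μ) = ∫ θ in (0:ℝ)..π, F r θ := by
      rw [intervalIntegral.integral_of_le pi_pos.le]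
    rw [this]
    have : ∀ θ, F r θ = ((-1:ℝ)^r * x^(2*r) / ((2*r).factorial : ℝ)) * Real.sin θ ^ (2*r) := by
      intro θ; simp only [F, mul_pow]; ring
    simp only [this]
    rw [intervalIntegral.integral_const_mul, integral_sin_pow_even']
    have h2 : ((2*r).factorial : ℝ) ≠ 0 := by positivity
    have h3 : (x/2)^(2*r) = x^(2*r) / 4^r := by
      rw [div_pow, pow_mul, pow_mul]; norm_num
    rw [h3]
    have h4 : ((r.factorial:ℝ))^2 ≠ 0 := by positivity
    field_simp
  simp only [hval] at hs
  have hs2 : HasSum (fun r => (-1:ℝ)^r * (x / 2)^(2*r) / ((r.factorial:ℝ))^2)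
      ((1/π) * ∫ θ in (0:ℝ)..π, Real.cos (x * Real.sin θ)) := by
    have := hs.mul_left (1/π)
    simp only [← mul_assoc, one_div, inv_mul_cancel₀ pi_ne_zero, one_mul] at this
    simpa using this
  exact hs2.tsum_eq

lemma step_fubini (R : ℝ) (hR : 0 < R) :
    (∫ x in (0:ℝ)..R, besselJ0 x)
      = (1/π) * ∫ θ in Ioo (0:ℝ) π, Real.sin (R * Real.sin θ) / Real.sin θ := by
  have key : (∫ x in Ioc (0:ℝ) R, ∫ θ in Ioc (0:ℝ) π, Real.cos (x * Real.sin θ))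
      = ∫ θ in Ioc (0:ℝ) π, ∫ x in Ioc (0:ℝ) R, Real.cos (x * Real.sin θ) := by
    apply MeasureTheory.integral_integral_swap
    have hc : Continuous (fun p : ℝ × ℝ => Real.cos (p.1 * Real.sin p.2)) := by fun_prop
    apply (integrable_const (1:ℝ)).mono' hc.aestronglyMeasurable
    · exact Filter.Eventually.of_forall fun p => by
        simpa using Real.abs_cos_le_one _
  calc (∫ x in (0:ℝ)..R, besselJ0 x)
      = ∫ x in Ioc (0:ℝ) R, (1/π) * ∫ θ in Ioc (0:ℝ) π, Real.cos (x * Real.sin θ) := by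
        rw [intervalIntegral.integral_of_le hR.le]
        apply MeasureTheory.integral_congr_ae (Filter.Eventually.of_forall fun x => ?_)
        rw [besselJ0_eq x, intervalIntegral.integral_of_le pi_pos.le]
    _ = (1/π) * ∫ θ in Ioc (0:ℝ) π, ∫ x in Ioc (0:ℝ) R, Real.cos (x * Real.sin θ) := by
        rw [MeasureTheory.integral_const_mul, key]
    _ = (1/π) * ∫ θ in Ioo (0:ℝ) π, Real.sin (R * Real.sin θ) / Real.sin θ := by
        rw [MeasureTheory.integral_Ioc_eq_integral_Ioo]
        congr 1
        apply MeasureTheory.setIntegral_congr_fun measurableSet_Ioo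
        intro θ hθ
        have hs : 0 < Real.sin θ := Real.sin_pos_of_pos_of_lt_pi hθ.1 hθ.2
        have : (∫ x in Ioc (0:ℝ) R, Real.cos (x * Real.sin θ))
            = ∫ x in (0:ℝ)..R, Real.cos (Real.sin θ * x) := by
          rw [intervalIntegral.integral_of_le hR.le]
          apply MeasureTheory.integral_congr_ae (Filter.Eventually.of_forall fun x => ?_)
          rw [mul_comm]
        simp only []
        rw [this, intervalIntegral.integral_comp_mul_left (fun y => Real.cos y) hs.ne']
        simp [mul_comm R, div_eq_inv_mul]

lemma sin_image : Real.sin '' Ioo (0:ℝ) (π/2) = Ioo (0:ℝ) 1 := by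
  ext u
  constructor
  · rintro ⟨θ, hθ, rfl⟩
    refine ⟨Real.sin_pos_of_pos_of_lt_pi hθ.1 (hθ.2.trans (by linarith [pi_pos])), ?_⟩
    have := Real.strictMonoOn_sin (by constructor <;> [linarith [pi_pos, hθ.1.le]; linarith [hθ.2.le]])
      (by constructor <;> [linarith [pi_pos]; linarith]) hθ.2
    simpa using this
  · intro hu
    refine ⟨Real.arcsin u, ⟨Real.arcsin_pos.2 hu.1, ?_⟩, Real.sin_arcsin (by linarith [hu.1]) hu.2.le⟩
    have := Real.arcsin_lt_pi_div_two (x := u)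
    rw [this]; exact hu.2

lemma hasDeriv_sin_within (s : Set ℝ) : ∀ θ ∈ s, HasDerivWithinAt Real.sin (Real.cos θ) s θ :=
  fun θ _ => (Real.hasDerivAt_sin θ).hasDerivWithinAt

lemma injOn_sin : Set.InjOn Real.sin (Ioo (0:ℝ) (π/2)) := by
  apply Real.strictMonoOn_sin.injOn.mono
  intro θ hθ
  constructor <;> [linarith [hθ.1, pi_pos]; linarith [hθ.2.le]]

lemma subst_sin (g : ℝ → ℝ) :
    (∫ u in Ioo (0:ℝ) 1, g u) = ∫ θ in Ioo (0:ℝ) (π/2), |Real.cos θ| • g (Real.sin θ) := by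
  rw [← sin_image]
  exact integral_image_eq_integral_abs_deriv_smul measurableSet_Ioo
    (hasDeriv_sin_within _) injOn_sin g

lemma subst_sin_integrable (g : ℝ → ℝ) :
    IntegrableOn g (Ioo (0:ℝ) 1) ↔
      IntegrableOn (fun θ => |Real.cos θ| • g (Real.sin θ)) (Ioo (0:ℝ) (π/2)) := by
  rw [← sin_image]
  exact integrableOn_image_iff_integrableOn_abs_deriv_smul measurableSet_Ioo
    (hasDeriv_sin_within _) injOn_sin g

lemma phi_meas (R : ℝ) : Measurable (fun θ : ℝ => Real.sin (R * Real.sin θ) / Real.sin θ) := by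
  fun_prop

lemma phi_bound (R : ℝ) {s : ℝ} (hs : 0 < s) : |Real.sin (R * s) / s| ≤ |R| := by
  rw [abs_div, abs_of_pos hs, div_le_iff₀ hs]
  calc |Real.sin (R * s)| ≤ |R * s| := Real.abs_sin_le_abs
    _ = |R| * s := by rw [abs_mul, abs_of_pos hs]

lemma phi_integrable (R : ℝ) {a b : ℝ} (hab : Ioo a b ⊆ Ioo 0 π) :
    IntegrableOn (fun θ : ℝ => Real.sin (R * Real.sin θ) / Real.sin θ) (Ioo a b) := by
  apply Integrable.mono' (integrable_const |R|) (phi_meas R).aestronglyMeasurable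
  filter_upwards [ae_restrict_mem measurableSet_Ioo] with θ hθ
  have := hab hθ
  exact phi_bound R (Real.sin_pos_of_pos_of_lt_pi this.1 this.2)

lemma phi_integrable' (R : ℝ) {a b : ℝ} (hab : Ioc a b ⊆ Ioc 0 π) :
    IntegrableOn (fun θ : ℝ => Real.sin (R * Real.sin θ) / Real.sin θ) (Ioc a b) := by
  apply Integrable.mono' (integrable_const |R|) (phi_meas R).aestronglyMeasurable
  filter_upwards [ae_restrict_mem measurableSet_Ioc] with θ hθ
  have hθ' := hab hθ
  rcases lt_or_eq_of_le hθ'.2 with h | h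
  · exact phi_bound R (Real.sin_pos_of_pos_of_lt_pi hθ'.1 h)
  · simp [h, Real.sin_pi]

lemma step_subst (R : ℝ) :
    (∫ θ in Ioo (0:ℝ) π, Real.sin (R * Real.sin θ) / Real.sin θ)
      = 2 * ∫ u in Ioo (0:ℝ) 1, Real.sin (R * u) / (u * Real.sqrt (1 - u^2)) := by
  have hhalf : (∫ u in Ioo (0:ℝ) 1, Real.sin (R * u) / (u * Real.sqrt (1 - u^2)))
      = ∫ θ in Ioo (0:ℝ) (π/2), Real.sin (R * Real.sin θ) / Real.sin θ := by
    rw [subst_sin]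
    apply MeasureTheory.setIntegral_congr_fun measurableSet_Ioo
    intro θ hθ
    have hcos : 0 < Real.cos θ := Real.cos_pos_of_mem_Ioo ⟨by linarith [hθ.1, pi_pos], hθ.2⟩
    have hsin : 0 < Real.sin θ := Real.sin_pos_of_pos_of_lt_pi hθ.1 (hθ.2.trans (by linarith [pi_pos]))
    have hsqrt : Real.sqrt (1 - Real.sin θ ^ 2) = Real.cos θ := by
      rw [← Real.cos_sq']
      exact Real.sqrt_sq hcos.le
    simp only [smul_eq_mul, hsqrt, abs_of_pos hcos]
    field_simp
  have hrefl : (∫ θ in Ioo (π/2) π, Real.sin (R * Real.sin θ) / Real.sin θ)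
      = ∫ θ in Ioo (0:ℝ) (π/2), Real.sin (R * Real.sin θ) / Real.sin θ := by
    have himg : (fun θ : ℝ => π - θ) '' Ioo (π/2) π = Ioo (0:ℝ) (π/2) := by
      rw [Set.image_const_sub_Ioo, show π - π = 0 by ring, show π - π/2 = π/2 by ring]
    have := integral_image_eq_integral_abs_deriv_smul (f := fun θ : ℝ => π - θ)
      (f' := fun _ => (-1:ℝ)) (measurableSet_Ioo (a := π/2) (b := π))
      (fun θ _ => ((hasDerivAt_id θ).const_sub π).hasDerivWithinAt)
      (fun a _ b _ h => by dsimp at h; linarith)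
      (fun θ => Real.sin (R * Real.sin θ) / Real.sin θ)
    rw [himg] at this
    rw [this]
    apply MeasureTheory.setIntegral_congr_fun measurableSet_Ioo
    intro θ hθ
    simp [Real.sin_pi_sub]
  have hsplit : (∫ θ in Ioo (0:ℝ) π, Real.sin (R * Real.sin θ) / Real.sin θ)
      = (∫ θ in Ioo (0:ℝ) (π/2), Real.sin (R * Real.sin θ) / Real.sin θ)
        + ∫ θ in Ioo (π/2) π, Real.sin (R * Real.sin θ) / Real.sin θ := by
    rw [← MeasureTheory.integral_Ioc_eq_integral_Ioo,
        ← MeasureTheory.integral_Ioc_eq_integral_Ioo,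
        ← MeasureTheory.integral_Ioc_eq_integral_Ioo,
        ← MeasureTheory.setIntegral_union (by
          simp [Set.disjoint_left]
          intro a _ h h2; linarith) measurableSet_Ioc
        (phi_integrable' R (Set.Ioc_subset_Ioc le_rfl (by linarith [pi_pos])))
        (phi_integrable' R (Set.Ioc_subset_Ioc (by linarith [pi_pos]) le_rfl))]
    rw [Set.Ioc_union_Ioc_eq_Ioc (by linarith [pi_pos]) (by linarith [pi_pos])]
  rw [hsplit, hrefl, hhalf]
  ring

noncomputable def gker (u : ℝ) : ℝ := (1 - Real.sqrt (1 - u^2)) / (u * Real.sqrt (1 - u^2))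

lemma wker_integrable : IntegrableOn (fun u : ℝ => 1 / Real.sqrt (1 - u^2)) (Ioo (0:ℝ) 1) := by
  rw [subst_sin_integrable]
  apply ((integrableOn_const_iff (C := (1:ℝ))).2 (Or.inr measure_Ioo_lt_top)).congr_fun
    (fun θ hθ => ?_) measurableSet_Ioo
  have hcos : 0 < Real.cos θ := Real.cos_pos_of_mem_Ioo ⟨by linarith [hθ.1, pi_pos], hθ.2⟩
  have hsqrt : Real.sqrt (1 - Real.sin θ ^ 2) = Real.cos θ := by
    rw [← Real.cos_sq']; exact Real.sqrt_sq hcos.le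
  rw [hsqrt, abs_of_pos hcos, smul_eq_mul]
  field_simp

lemma gker_nonneg {u : ℝ} (hu : u ∈ Ioo (0:ℝ) 1) : 0 ≤ gker u := by
  have h1 : 0 < Real.sqrt (1 - u^2) := Real.sqrt_pos.2 (by nlinarith [hu.1, hu.2])
  have h2 : Real.sqrt (1 - u^2) ≤ 1 := Real.sqrt_le_one.2 (by nlinarith [hu.1, hu.2])
  apply div_nonneg (by linarith) (mul_nonneg hu.1.le (Real.sqrt_nonneg _))

lemma gker_le {u : ℝ} (hu : u ∈ Ioo (0:ℝ) 1) : gker u ≤ 1 / Real.sqrt (1 - u^2) := by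
  obtain ⟨h0, h1⟩ := hu
  have hpos : (0:ℝ) < 1 - u^2 := by nlinarith
  have hs : 0 < Real.sqrt (1 - u^2) := Real.sqrt_pos.2 hpos
  have hkey : 1 - Real.sqrt (1 - u^2) ≤ u^2 := by
    have hle1 : Real.sqrt (1 - u^2) ≤ 1 := Real.sqrt_le_one.2 (by nlinarith)
    nlinarith [Real.sq_sqrt hpos.le, hs]
  rw [gker, div_le_div_iff₀ (by positivity) hs]
  calc (1 - Real.sqrt (1 - u^2)) * Real.sqrt (1 - u^2) ≤ u^2 * Real.sqrt (1 - u^2) := by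
        apply mul_le_mul_of_nonneg_right hkey hs.le
    _ ≤ 1 * (u * Real.sqrt (1 - u^2)) := by nlinarith [hs.le, sq_nonneg u, mul_nonneg (mul_nonneg h0.le h0.le) hs.le]

lemma gker_measurable : Measurable gker := by
  unfold gker; fun_prop

lemma gker_integrable : IntegrableOn gker (Ioo (0:ℝ) 1) := by
  apply Integrable.mono' wker_integrable gker_measurable.aestronglyMeasurable
  filter_upwards [ae_restrict_mem measurableSet_Ioo] with u hu
  rw [Real.norm_eq_abs, abs_of_nonneg (gker_nonneg hu)]
  exact gker_le hu

lemma kernel_split {u : ℝ} (hu : u ∈ Ioo (0:ℝ) 1) (R : ℝ) :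
    Real.sin (R * u) / (u * Real.sqrt (1 - u^2))
      = Real.sin (R * u) / u + Real.sin (R * u) * gker u := by
  obtain ⟨h0, h1⟩ := hu
  have hs : 0 < Real.sqrt (1 - u^2) := Real.sqrt_pos.2 (by nlinarith)
  rw [gker]
  field_simp
  ring

lemma riemann_lebesgue_sin {g : ℝ → ℝ} (hg : IntegrableOn g (Ioo (0:ℝ) 1)) :
    Tendsto (fun R : ℝ => ∫ u in Ioo (0:ℝ) 1, Real.sin (R * u) * g u) atTop (nhds 0) := by
  set f : ℝ → ℂ := fun u => ((Set.indicator (Ioo (0:ℝ) 1) g u : ℝ) : ℂ) with hf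
  have hfi : Integrable f := (hg.integrable_indicator measurableSet_Ioo).ofReal
  have h0 : Tendsto (fun w => ‖FourierTransform.fourier f w‖) (cocompact ℝ) (nhds 0) :=
    tendsto_norm_zero.comp (Real.zero_at_infty_fourier f)
  have hmap : Tendsto (fun R : ℝ => -R / (2*π)) atTop (cocompact ℝ) := by
    rw [cocompact_eq_atBot_atTop]
    apply Tendsto.mono_right _ le_sup_left
    have h1 : Tendsto (fun R : ℝ => R * (-(2*π)⁻¹)) atTop atBot :=
      tendsto_id.atTop_mul_const_of_neg (by simpa using by positivity : -(2*π)⁻¹ < 0)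
    apply h1.congr
    intro R
    field_simp
  have key : ∀ R : ℝ, (∫ u in Ioo (0:ℝ) 1, Real.sin (R * u) * g u)
      = Complex.im (FourierTransform.fourier f (-R / (2*π))) := by
    intro R
    rw [Real.fourier_real_eq]
    rw [show (∫ (v : ℝ), Real.fourierChar (-(v * (-R / (2*π)))) • f v).im
        = RCLike.im (∫ (v : ℝ), Real.fourierChar (-(v * (-R / (2*π)))) • f v) from rfl]
    have hconv : Integrable (fun v : ℝ => Real.fourierChar (-(v * (-R/(2*π)))) • f v) := by
      have h := (Real.fourierIntegral_convergent_iff (f := f) (μ := volume) (-R / (2*π))).2 hfi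
      apply h.congr
      apply Filter.Eventually.of_forall fun v => ?_
      norm_num [real_inner_comm, RCLike.inner_apply]
      rw [mul_comm v]
    rw [← integral_im hconv]
    rw [← MeasureTheory.integral_indicator (f := fun u => Real.sin (R * u) * g u) measurableSet_Ioo]
    apply MeasureTheory.integral_congr_ae (Filter.Eventually.of_forall fun v => ?_)
    have harg : -(v * (-R / (2*π))) = v * R / (2*π) := by ring
    rw [harg, Circle.smul_def, smul_eq_mul, RCLike.im_to_complex]
    rw [show ((Real.fourierChar (v * R / (2*π)) : Circle) : ℂ)
        = Complex.exp (↑(2 * π * (v * R / (2*π))) * Complex.I) from Real.fourierChar_apply _]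
    have h2 : 2 * π * (v * R / (2*π)) = R * v := by field_simp
    rw [h2]
    rw [Complex.mul_im]
    simp only [hf, Complex.ofReal_im, Complex.ofReal_re, mul_zero, zero_add,
      Complex.exp_ofReal_mul_I_re, Complex.exp_ofReal_mul_I_im]
    simp only [Set.indicator_apply]
    split_ifs with h
    · ring
    · simp
  have hbig := h0.comp hmap
  apply squeeze_zero_norm (fun R => ?_) hbig
  rw [key R]
  exact (Complex.abs_im_le_norm _)

lemma image_mul_Ioo {a b : ℝ} (ha : 0 < a) (hb : 0 < b) :
    (fun t => a * t) '' Ioo 0 b = Ioo 0 (a*b) := by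
  ext v
  constructor
  · rintro ⟨t, ht, rfl⟩
    exact ⟨mul_pos ha ht.1, by dsimp; nlinarith [ht.1, ht.2]⟩
  · intro hv
    exact ⟨v / a, ⟨div_pos hv.1 ha, by rw [div_lt_iff₀ ha]; nlinarith [hv.2]⟩, by field_simp⟩

lemma image_mul_Ioi {a : ℝ} (ha : 0 < a) : (fun t => a * t) '' Ioi 0 = Ioi (0:ℝ) := by
  ext v
  constructor
  · rintro ⟨t, ht, rfl⟩; exact mul_pos ha ht
  · intro hv; exact ⟨v / a, div_pos hv ha, by field_simp⟩

lemma integral_exp_neg_mul {a : ℝ} (ha : 0 < a) :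
    ∫ t in Ioi (0:ℝ), Real.exp (-(a * t)) = 1 / a := by
  have h := integral_image_eq_integral_abs_deriv_smul (s := Ioi (0:ℝ))
    (f := fun t => a * t) (f' := fun _ => a) measurableSet_Ioi
    (fun t _ => by simpa using ((hasDerivAt_id t).const_mul a).hasDerivWithinAt)
    (fun x _ y _ h => by dsimp at h; exact mul_left_cancel₀ ha.ne' h)
    (fun x => Real.exp (-x))
  rw [image_mul_Ioi ha] at h
  rw [integral_exp_neg_Ioi_zero] at h
  have h2 : (∫ t in Ioi (0:ℝ), |a| • Real.exp (-(a * t)))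
      = a * ∫ t in Ioi (0:ℝ), Real.exp (-(a * t)) := by
    simp only [abs_of_pos ha, smul_eq_mul]
    rw [MeasureTheory.integral_const_mul]
  rw [h2] at h
  rw [eq_comm, div_eq_iff ha.ne', eq_comm]
  nlinarith [h]

lemma exp_mul_integrable {a : ℝ} (ha : 0 < a) :
    IntegrableOn (fun t : ℝ => Real.exp (-(a * t))) (Ioi 0) := by
  have := exp_neg_integrableOn_Ioi 0 ha
  apply this.congr_fun (fun t _ => by ring_nf) measurableSet_Ioi

lemma sin_exp_antideriv (t : ℝ) (v : ℝ) :
    HasDerivAt (fun v => -(Real.exp (-(t*v)) * (t * Real.sin v + Real.cos v)) / (1+t^2))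
      (Real.exp (-(t*v)) * Real.sin v) v := by
  have h1 : HasDerivAt (fun v : ℝ => Real.exp (-(t*v))) (-t * Real.exp (-(t*v))) v := by
    have := (((hasDerivAt_id v).const_mul t).neg).exp
    simpa [mul_comm] using this
  have h2 : HasDerivAt (fun v : ℝ => t * Real.sin v + Real.cos v)
      (t * Real.cos v - Real.sin v) v := by
    exact (((Real.hasDerivAt_sin v).const_mul t).add (Real.hasDerivAt_cos v)).congr_deriv (by ring)
  have h3 := (h1.mul h2).neg.div_const (1+t^2)
  refine h3.congr_deriv ?_
  have : (1:ℝ) + t^2 ≠ 0 := by positivity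
  rw [div_eq_iff this]
  ring

lemma sin_exp_integral {t : ℝ} (R : ℝ) :
    ∫ v in (0:ℝ)..R, Real.exp (-(t*v)) * Real.sin v
      = (1 - Real.exp (-(t*R)) * (t * Real.sin R + Real.cos R)) / (1+t^2) := by
  rw [intervalIntegral.integral_eq_sub_of_hasDerivAt
    (fun v _ => sin_exp_antideriv t v) (by apply Continuous.intervalIntegrable; fun_prop)]
  simp
  ring

lemma aux_bound {t R : ℝ} (ht : 0 < t) :
    |Real.exp (-(t*R)) * (t * Real.sin R + Real.cos R) / (1+t^2)| ≤ 2 * Real.exp (-(t*R)) := by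
  have h1 : (0:ℝ) < 1 + t^2 := by positivity
  rw [abs_div, abs_of_pos h1, abs_mul, abs_of_pos (Real.exp_pos _), div_le_iff₀ h1]
  have h2 : |t * Real.sin R + Real.cos R| ≤ t + 1 := by
    calc |t * Real.sin R + Real.cos R| ≤ |t * Real.sin R| + |Real.cos R| := abs_add_le _ _
      _ ≤ t * 1 + 1 := by
          rw [abs_mul, abs_of_pos ht]
          have := Real.abs_sin_le_one R
          have := Real.abs_cos_le_one R
          gcongr <;> assumption
      _ = t + 1 := by ring
  calc Real.exp (-(t*R)) * |t * Real.sin R + Real.cos R| ≤ Real.exp (-(t*R)) * (t+1) := by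
        gcongr
    _ ≤ 2 * Real.exp (-(t*R)) * (1+t^2) := by nlinarith [Real.exp_pos (-(t*R)), sq_nonneg (t-1)]

lemma remainder_integrable {R : ℝ} (hR : 0 < R) :
    IntegrableOn (fun t : ℝ => Real.exp (-(t*R)) * (t * Real.sin R + Real.cos R) / (1+t^2))
      (Ioi 0) := by
  apply Integrable.mono' (((exp_mul_integrable hR).congr_fun
      (fun t _ => by rw [mul_comm]) measurableSet_Ioi).const_mul 2)
    (by apply Measurable.aestronglyMeasurable; fun_prop)
  filter_upwards [ae_restrict_mem measurableSet_Ioi] with t ht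
  simp only [Real.norm_eq_abs]
  exact aux_bound (R := R) ht

lemma dirichlet_eq {R : ℝ} (hR : 0 < R) :
    (∫ v in Ioo (0:ℝ) R, Real.sin v / v)
      = π/2 - ∫ t in Ioi (0:ℝ), Real.exp (-(t*R)) * (t * Real.sin R + Real.cos R) / (1+t^2) := by
  have hmeas : AEStronglyMeasurable (fun p : ℝ × ℝ => Real.sin p.1 * Real.exp (-(p.1 * p.2)))
      ((volume.restrict (Ioc 0 R)).prod (volume.restrict (Ioi 0))) := by
    apply Continuous.aestronglyMeasurable; fun_prop
  have hnormval : ∀ v : ℝ, 0 < v →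
      (∫ t in Ioi (0:ℝ), ‖Real.sin v * Real.exp (-(v * t))‖) = |Real.sin v| * (1/v) := by
    intro v hv
    have : ∀ t : ℝ, ‖Real.sin v * Real.exp (-(v * t))‖ = |Real.sin v| * Real.exp (-(v * t)) := by
      intro t
      rw [norm_mul, Real.norm_eq_abs, Real.norm_eq_abs, abs_of_pos (Real.exp_pos _)]
    simp only [this]
    rw [MeasureTheory.integral_const_mul, integral_exp_neg_mul hv]
  have hint : Integrable (fun p : ℝ × ℝ => Real.sin p.1 * Real.exp (-(p.1 * p.2)))
      ((volume.restrict (Ioc 0 R)).prod (volume.restrict (Ioi 0))) := by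
    rw [MeasureTheory.integrable_prod_iff hmeas]
    constructor
    · filter_upwards [ae_restrict_mem measurableSet_Ioc] with v hv
      exact ((exp_mul_integrable hv.1).const_mul _)
    · apply Integrable.mono' (integrable_const (1:ℝ))
        (hmeas.norm.integral_prod_right')
      filter_upwards [ae_restrict_mem measurableSet_Ioc] with v hv
      rw [Real.norm_eq_abs, hnormval v hv.1]
      rw [abs_of_nonneg (mul_nonneg (abs_nonneg _) (one_div_nonneg.2 hv.1.le))]
      rw [mul_one_div, div_le_one hv.1]
      calc |Real.sin v| ≤ |v| := Real.abs_sin_le_abs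
        _ = v := abs_of_pos hv.1
  have step1 : (∫ v in Ioo (0:ℝ) R, Real.sin v / v)
      = ∫ v in Ioc (0:ℝ) R, ∫ t in Ioi (0:ℝ), Real.sin v * Real.exp (-(v * t)) := by
    rw [← MeasureTheory.integral_Ioc_eq_integral_Ioo]
    apply MeasureTheory.setIntegral_congr_fun measurableSet_Ioc
    intro v hv
    dsimp only
    rw [MeasureTheory.integral_const_mul, integral_exp_neg_mul hv.1]
    rw [mul_one_div, div_eq_mul_inv, mul_comm]
  have step2 : (∫ v in Ioc (0:ℝ) R, ∫ t in Ioi (0:ℝ), Real.sin v * Real.exp (-(v * t)))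
      = ∫ t in Ioi (0:ℝ), ∫ v in Ioc (0:ℝ) R, Real.sin v * Real.exp (-(v * t)) :=
    MeasureTheory.integral_integral_swap hint
  have step3 : ∀ t : ℝ, (∫ v in Ioc (0:ℝ) R, Real.sin v * Real.exp (-(v * t)))
      = (1 - Real.exp (-(t*R)) * (t * Real.sin R + Real.cos R)) / (1+t^2) := by
    intro t
    rw [← sin_exp_integral (t := t) R, intervalIntegral.integral_of_le hR.le]
    apply MeasureTheory.setIntegral_congr_fun measurableSet_Ioc
    intro v _
    dsimp only
    rw [mul_comm (Real.sin v), mul_comm v t]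
  have step4 : (∫ t in Ioi (0:ℝ), (1 - Real.exp (-(t*R)) * (t * Real.sin R + Real.cos R)) / (1+t^2))
      = π/2 - ∫ t in Ioi (0:ℝ), Real.exp (-(t*R)) * (t * Real.sin R + Real.cos R) / (1+t^2) := by
    have hsplit : ∀ t : ℝ, (1 - Real.exp (-(t*R)) * (t * Real.sin R + Real.cos R)) / (1+t^2)
        = (1+t^2)⁻¹ - Real.exp (-(t*R)) * (t * Real.sin R + Real.cos R) / (1+t^2) := by
      intro t
      have : (1:ℝ) + t^2 ≠ 0 := by positivity
      field_simp
    simp only [hsplit]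
    rw [MeasureTheory.integral_sub (integrable_inv_one_add_sq.integrableOn)
      (remainder_integrable hR)]
    congr 1
    rw [integral_Ioi_inv_one_add_sq]
    simp
  rw [step1, step2,
    MeasureTheory.integral_congr_ae (Filter.Eventually.of_forall fun t => step3 t), step4]

lemma remainder_bound {R : ℝ} (hR : 0 < R) :
    ‖∫ t in Ioi (0:ℝ), Real.exp (-(t*R)) * (t * Real.sin R + Real.cos R) / (1+t^2)‖
      ≤ 2 / R := by
  have hval : (∫ t in Ioi (0:ℝ), 2 * Real.exp (-(t*R))) = 2 / R := by
    rw [MeasureTheory.integral_const_mul]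
    rw [show (∫ t in Ioi (0:ℝ), Real.exp (-(t*R))) = ∫ t in Ioi (0:ℝ), Real.exp (-(R*t)) from
      MeasureTheory.setIntegral_congr_fun measurableSet_Ioi (fun t _ => by rw [mul_comm])]
    rw [integral_exp_neg_mul hR]
    ring
  rw [← hval]
  apply MeasureTheory.norm_integral_le_of_norm_le
    (((exp_mul_integrable hR).congr_fun (fun t _ => by rw [mul_comm]) measurableSet_Ioi).const_mul 2)
  filter_upwards [ae_restrict_mem measurableSet_Ioi] with t ht
  rw [Real.norm_eq_abs]
  exact aux_bound ht

lemma remainder_tendsto :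
    Tendsto (fun R : ℝ => ∫ t in Ioi (0:ℝ),
      Real.exp (-(t*R)) * (t * Real.sin R + Real.cos R) / (1+t^2)) atTop (nhds 0) := by
  apply squeeze_zero_norm' (a := fun R : ℝ => 2 / R)
  · filter_upwards [eventually_gt_atTop (0:ℝ)] with R hR
    exact remainder_bound hR
  · simpa using tendsto_const_nhds.div_atTop (tendsto_id (α := ℝ) |>.mono_left le_rfl)

lemma dirichlet_tendsto :
    Tendsto (fun R : ℝ => ∫ v in Ioo (0:ℝ) R, Real.sin v / v) atTop (nhds (π/2)) := by
  have h : Tendsto (fun R : ℝ => π/2 - ∫ t in Ioi (0:ℝ),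
      Real.exp (-(t*R)) * (t * Real.sin R + Real.cos R) / (1+t^2)) atTop (nhds (π/2 - 0)) :=
    tendsto_const_nhds.sub remainder_tendsto
  rw [sub_zero] at h
  apply h.congr'
  filter_upwards [eventually_gt_atTop (0:ℝ)] with R hR
  exact (dirichlet_eq hR).symm

lemma dirichlet_subst {R : ℝ} (hR : 0 < R) :
    (∫ u in Ioo (0:ℝ) 1, Real.sin (R*u)/u) = ∫ v in Ioo (0:ℝ) R, Real.sin v / v := by
  have h := integral_image_eq_integral_abs_deriv_smul (s := Ioo (0:ℝ) 1) (f := fun u => R*u)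
    (f' := fun _ => R) measurableSet_Ioo
    (fun u _ => by simpa using ((hasDerivAt_id u).const_mul R).hasDerivWithinAt)
    (fun x _ y _ hxy => mul_left_cancel₀ hR.ne' (by simpa using hxy))
    (fun v => Real.sin v / v)
  rw [image_mul_Ioo hR one_pos, mul_one] at h
  rw [h]
  apply MeasureTheory.setIntegral_congr_fun measurableSet_Ioo
  intro u hu
  dsimp only
  rw [abs_of_pos hR, smul_eq_mul]
  have h1 : u ≠ 0 := hu.1.ne'
  field_simp

lemma T_tendsto :
    Tendsto (fun R : ℝ => ∫ u in Ioo (0:ℝ) 1, Real.sin (R*u)/u) atTop (nhds (π/2)) := by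
  apply dirichlet_tendsto.congr'
  filter_upwards [eventually_gt_atTop (0:ℝ)] with R hR
  exact (dirichlet_subst hR).symm

lemma sin_div_integrable (R : ℝ) : IntegrableOn (fun u : ℝ => Real.sin (R*u)/u) (Ioo 0 1) := by
  apply Integrable.mono' (integrable_const |R|)
    (by apply Measurable.aestronglyMeasurable; fun_prop)
  filter_upwards [ae_restrict_mem measurableSet_Ioo] with u hu
  rw [Real.norm_eq_abs, abs_div, abs_of_pos hu.1, div_le_iff₀ hu.1]
  calc |Real.sin (R*u)| ≤ |R*u| := Real.abs_sin_le_abs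
    _ = |R| * u := by rw [abs_mul, abs_of_pos hu.1]

lemma sin_gker_integrable (R : ℝ) :
    IntegrableOn (fun u : ℝ => Real.sin (R*u) * gker u) (Ioo 0 1) := by
  apply Integrable.mono' gker_integrable
    (by apply Measurable.aestronglyMeasurable; exact (measurable_sin.comp (measurable_const.mul measurable_id)).mul gker_measurable)
  filter_upwards [ae_restrict_mem measurableSet_Ioo] with u hu
  rw [Real.norm_eq_abs, abs_mul]
  calc |Real.sin (R*u)| * |gker u| ≤ 1 * |gker u| := by
        gcongr; exact Real.abs_sin_le_one _
    _ = gker u := by rw [one_mul, abs_of_nonneg (gker_nonneg hu)]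

lemma main_split (R : ℝ) :
    (∫ u in Ioo (0:ℝ) 1, Real.sin (R * u) / (u * Real.sqrt (1 - u^2)))
      = (∫ u in Ioo (0:ℝ) 1, Real.sin (R*u)/u)
        + ∫ u in Ioo (0:ℝ) 1, Real.sin (R*u) * gker u := by
  rw [← MeasureTheory.integral_add (sin_div_integrable R) (sin_gker_integrable R)]
  apply MeasureTheory.setIntegral_congr_fun measurableSet_Ioo
  intro u hu
  exact kernel_split hu R

/-- ∫_0^∞ J₀(x) dx = 1, as an improper integral. -/
theorem integral_besselJ0 :
    Tendsto (fun R : ℝ => ∫ x in (0 : ℝ)..R, besselJ0 x) atTop (nhds 1) := by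
  have hS : Tendsto (fun R : ℝ => ∫ u in Ioo (0:ℝ) 1, Real.sin (R*u) * gker u)
      atTop (nhds 0) := riemann_lebesgue_sin gker_integrable
  have hsum : Tendsto (fun R : ℝ =>
      (1/π) * (2 * ((∫ u in Ioo (0:ℝ) 1, Real.sin (R*u)/u)
        + ∫ u in Ioo (0:ℝ) 1, Real.sin (R*u) * gker u)))
      atTop (nhds ((1/π) * (2 * (π/2 + 0)))) :=
    ((T_tendsto.add hS).const_mul 2).const_mul (1/π)
  have hval : (1/π) * (2 * (π/2 + 0)) = 1 := by
    field_simp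
    ring
  rw [hval] at hsum
  apply hsum.congr'
  filter_upwards [eventually_gt_atTop (0:ℝ)] with R hR
  rw [step_fubini R hR, step_subst R, main_split R]
end

section
/- For real b, ∫_0^∞ e^{-x²} J_0(bx) dx = (π/2) Σ_{r=0}^∞ (b/2)^{2r} / (Γ(1/2 - r) (r!)²). -/
open Real MeasureTheory

theorem gauss_moment (r : ℕ) :
    ∫ x in Set.Ioi (0:ℝ), x ^ (2*r) * Real.exp (-x^2)
      = Real.Gamma ((r:ℝ) + 1/2) / 2 := by
  have h : (0:ℝ) < (r:ℝ) + 1/2 := by positivity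
  have key : Real.Gamma ((r:ℝ) + 1/2)
      = ∫ x in Set.Ioi (0:ℝ), 2 * (x ^ (2*r) * Real.exp (-x^2)) := by
    rw [Real.Gamma_eq_integral h, ← integral_comp_rpow_Ioi_of_pos (zero_lt_two (α := ℝ))]
    refine setIntegral_congr_fun measurableSet_Ioi fun x hx => ?_
    have hx' : (0:ℝ) < x := hx
    have h2 : x ^ (2:ℝ) = x ^ 2 := by
      rw [← Real.rpow_natCast x 2]; norm_num
    rw [smul_eq_mul, h2]
    have h3 : x ^ ((2:ℝ) - 1) = x := by norm_num
    rw [h3]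
    have h4 : ((x:ℝ) ^ 2) ^ ((r:ℝ) + 1/2 - 1) = x ^ (2 * ((r:ℝ) + 1/2 - 1)) := by
      rw [← h2, ← Real.rpow_mul hx'.le]
    rw [h4]
    have h5 : x * x ^ (2 * ((r:ℝ) + 1/2 - 1)) = x ^ (2*r : ℕ) := by
      have e1 : x * x ^ (2 * ((r:ℝ) + 1/2 - 1)) = x ^ ((1:ℝ) + 2*((r:ℝ)+1/2-1)) := by
        rw [Real.rpow_add hx', Real.rpow_one]
      rw [e1, ← Real.rpow_natCast x (2*r)]
      congr 1; push_cast; ring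
    calc 2 * x * (Real.exp (-x ^ 2) * x ^ (2 * ((r:ℝ) + 1/2 - 1)))
        = 2 * (x * x ^ (2 * ((r:ℝ) + 1/2 - 1)) * Real.exp (-x^2)) := by ring
      _ = _ := by rw [h5]
  rw [key, integral_const_mul]
  ring


theorem gauss_intble (r : ℕ) :
    IntegrableOn (fun x : ℝ => x ^ (2*r) * Real.exp (-x^2)) (Set.Ioi 0) := by
  have h := integrableOn_rpow_mul_exp_neg_mul_sq (b := 1) (one_pos)
    (s := ((2*r : ℕ) : ℝ)) (lt_of_lt_of_le neg_one_lt_zero (by positivity))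
  refine (h.congr_fun (fun x hx => ?_) measurableSet_Ioi)
  have hx' : (0:ℝ) < x := hx
  beta_reduce
  rw [Real.rpow_natCast x (2*r)]
  norm_num

theorem gamma_bound (r : ℕ) :
    Real.Gamma ((r:ℝ) + 1/2) ≤ Real.sqrt Real.pi * r.factorial := by
  induction r with
  | zero =>
    simp only [Nat.cast_zero, zero_add, Nat.factorial_zero, Nat.cast_one, mul_one]
    rw [Real.Gamma_one_half_eq]
  | succ n ih =>
    have hne : ((n:ℝ) + 1/2) ≠ 0 := by positivity
    have : ((n+1:ℕ):ℝ) + 1/2 = ((n:ℝ) + 1/2) + 1 := by push_cast; ring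
    rw [this, Real.Gamma_add_one hne]
    have hpos : 0 < Real.Gamma ((n:ℝ) + 1/2) := Real.Gamma_pos_of_pos (by positivity)
    calc ((n:ℝ) + 1/2) * Real.Gamma ((n:ℝ) + 1/2)
        ≤ ((n:ℝ) + 1) * (Real.sqrt Real.pi * n.factorial) := by
          apply mul_le_mul (by linarith) ih hpos.le (by positivity)
      _ = Real.sqrt Real.pi * (n+1).factorial := by
          rw [Nat.factorial_succ]; push_cast; ring

theorem reflect (r : ℕ) :
    Real.Gamma (1/2 - (r:ℝ)) * Real.Gamma ((r:ℝ) + 1/2) = Real.pi * (-1)^r := by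
  have h := Real.Gamma_mul_Gamma_one_sub (1/2 - (r:ℝ))
  have h1 : (1:ℝ) - (1/2 - (r:ℝ)) = (r:ℝ) + 1/2 := by ring
  rw [h1] at h
  have h2 : Real.sin (Real.pi * (1/2 - (r:ℝ))) = (-1)^r := by
    rw [show Real.pi * (1/2 - (r:ℝ)) = Real.pi/2 - (r:ℝ)*Real.pi by ring,
      Real.sin_sub_nat_mul_pi, Real.sin_pi_div_two, mul_one]
  rw [h, h2]
  rcases Nat.even_or_odd r with he | ho
  · rw [he.neg_one_pow]; simp
  · rw [ho.neg_one_pow, div_neg, div_one]; ring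

theorem gamma_half_ne (r : ℕ) : Real.Gamma (1/2 - (r:ℝ)) ≠ 0 := by
  apply Real.Gamma_ne_zero
  intro m
  intro hcon
  have : (1:ℝ)/2 = (r:ℝ) - (m:ℝ) := by linarith
  have h2 : ((2:ℝ)) * ((r:ℝ) - (m:ℝ)) = 1 := by rw [← this]; norm_num
  rcases le_or_gt (m:ℤ) (r:ℤ) with h | h
  · have : ((2:ℤ)) * ((r:ℤ) - (m:ℤ)) = 1 := by exact_mod_cast h2
    omega
  · have : ((2:ℤ)) * ((r:ℤ) - (m:ℤ)) = 1 := by exact_mod_cast h2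
    omega

/-- ∫_0^∞ e^{-x²} J₀(bx) dx = (π/2) Σ_{r} (b/2)^{2r}/(Γ(1/2-r)(r!)²). -/
theorem integral_gaussian_besselJ0 (b : ℝ) :
    ∫ x in Set.Ioi (0 : ℝ), Real.exp (-x ^ 2) * besselJ0 (b * x) =
      (Real.pi / 2) *
        ∑' r : ℕ, (b / 2) ^ (2 * r) /
          (Real.Gamma (1 / 2 - (r : ℝ)) * (r.factorial : ℝ) ^ 2) := by
  have hgampos : ∀ r : ℕ, 0 < Real.Gamma ((r:ℝ) + 1/2) :=
    fun r => Real.Gamma_pos_of_pos (by positivity)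
  set c : ℕ → ℝ := fun r => (-1:ℝ)^r * (b/2)^(2*r) / (r.factorial:ℝ)^2 with hc
  set f : ℕ → ℝ → ℝ := fun r x => c r * (x^(2*r) * Real.exp (-x^2)) with hf
  have habs : ∀ r : ℕ, |c r| = (b/2)^(2*r) / (r.factorial:ℝ)^2 := by
    intro r
    have h1 : (0:ℝ) ≤ (b/2)^(2*r) := by rw [pow_mul]; exact pow_nonneg (sq_nonneg _) _
    simp only [hc, abs_div, abs_mul, abs_pow, abs_neg, abs_one, one_pow, one_mul,
      abs_of_nonneg h1, Nat.abs_cast]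
  have hint : ∀ r : ℕ, IntegrableOn (f r) (Set.Ioi 0) :=
    fun r => (gauss_intble r).const_mul (c r)
  have hinteg : ∀ r : ℕ, ∫ x in Set.Ioi (0:ℝ), f r x
      = c r * (Real.Gamma ((r:ℝ) + 1/2) / 2) := by
    intro r
    rw [hf]
    rw [integral_const_mul, gauss_moment]
  -- pointwise expansion
  have hpt : ∀ x : ℝ, Real.exp (-x^2) * besselJ0 (b*x) = ∑' r, f r x := by
    intro x
    rw [besselJ0, ← tsum_mul_left]
    apply tsum_congr
    intro r
    have h1 : (b * x / 2) ^ (2*r) = (b/2)^(2*r) * x^(2*r) := by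
      rw [← mul_pow]; congr 1; ring
    simp only [hf, hc, h1]
    ring
  -- the summable majorant
  have hg : Summable (fun r : ℕ => |c r| * (Real.Gamma ((r:ℝ) + 1/2) / 2)) := by
    have hmaj : ∀ r : ℕ, |c r| * (Real.Gamma ((r:ℝ) + 1/2) / 2)
        ≤ (Real.sqrt Real.pi / 2) * (((b/2)^2)^r / r.factorial) := by
      intro r
      rw [habs r, pow_mul]
      have h2 : (0:ℝ) < (r.factorial : ℝ) := by positivity
      calc ((b/2)^2)^r / (r.factorial:ℝ)^2 * (Real.Gamma ((r:ℝ)+1/2) / 2)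
          ≤ ((b/2)^2)^r / (r.factorial:ℝ)^2 * ((Real.sqrt Real.pi * r.factorial) / 2) := by
            apply mul_le_mul_of_nonneg_left (by linarith [gamma_bound r]) (by positivity)
        _ = (Real.sqrt Real.pi / 2) * (((b/2)^2)^r / r.factorial) := by
            field_simp
    exact Summable.of_nonneg_of_le
      (fun r => mul_nonneg (abs_nonneg _) (by linarith [hgampos r])) hmaj
      ((Real.summable_pow_div_factorial ((b/2)^2)).mul_left _)
  -- swap integral and sum
  have hswap : ∫ x in Set.Ioi (0:ℝ), ∑' r, f r x = ∑' r, ∫ x in Set.Ioi (0:ℝ), f r x := by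
    apply integral_tsum
    · intro r
      exact (Continuous.aestronglyMeasurable (by fun_prop))
    · have hlint : ∀ r : ℕ, ∫⁻ x in Set.Ioi (0:ℝ), ‖f r x‖ₑ
          = ENNReal.ofReal (|c r| * (Real.Gamma ((r:ℝ) + 1/2) / 2)) := by
        intro r
        rw [← ofReal_integral_norm_eq_lintegral_enorm (hint r)]
        congr 1
        have : ∀ x : ℝ, ‖f r x‖ = |c r| * (x^(2*r) * Real.exp (-x^2)) := by
          intro x
          have h1 : (0:ℝ) ≤ x^(2*r) := by rw [pow_mul]; exact pow_nonneg (sq_nonneg _) _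
          rw [hf]
          rw [Real.norm_eq_abs, abs_mul, abs_of_nonneg (by positivity : (0:ℝ) ≤ x^(2*r) * Real.exp (-x^2))]
        simp only [this]
        rw [integral_const_mul, gauss_moment]
      simp only [hlint]
      rw [← ENNReal.ofReal_tsum_of_nonneg (fun r => by positivity) hg]
      exact ENNReal.ofReal_ne_top
  calc ∫ x in Set.Ioi (0:ℝ), Real.exp (-x^2) * besselJ0 (b*x)
      = ∫ x in Set.Ioi (0:ℝ), ∑' r, f r x := by
        refine setIntegral_congr_fun measurableSet_Ioi fun x _ => hpt x
    _ = ∑' r, ∫ x in Set.Ioi (0:ℝ), f r x := hswap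
    _ = ∑' r : ℕ, (Real.pi / 2) * ((b / 2) ^ (2 * r) /
          (Real.Gamma (1 / 2 - (r : ℝ)) * (r.factorial : ℝ) ^ 2)) := by
        apply tsum_congr
        intro r
        rw [hinteg r, hc]
        have hne := gamma_half_ne r
        have hfac : ((r.factorial : ℝ)) ≠ 0 := by positivity
        have hrefl := reflect r
        have hsq : ((-1:ℝ)^r) * ((-1:ℝ)^r) = 1 := by
          rw [← pow_add, ← two_mul, pow_mul]; norm_num
        have key : Real.Gamma ((r:ℝ)+1/2)
            = Real.pi * (-1)^r / Real.Gamma (1/2 - (r:ℝ)) := by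
          rw [eq_div_iff hne]
          linarith [hrefl]
        rw [key]
        have expand : (-1:ℝ)^r * (b/2)^(2*r) / ((r.factorial:ℝ))^2
              * (Real.pi * (-1)^r / Real.Gamma (1/2 - (r:ℝ)) / 2)
            = ((-1:ℝ)^r * (-1)^r) * (Real.pi / 2 * ((b/2)^(2*r)
              / (Real.Gamma (1/2 - (r:ℝ)) * ((r.factorial:ℝ))^2))) := by
          field_simp
        rw [expand, hsq, one_mul]
    _ = (Real.pi / 2) * ∑' r : ℕ, (b / 2) ^ (2 * r) /
          (Real.Gamma (1 / 2 - (r : ℝ)) * (r.factorial : ℝ) ^ 2) := by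
        rw [tsum_mul_left]
end

section
/- For all real x, y and natural n, (y - x)^n = ∫_0^∞ e^{-t} L_n(xt, y) dt, where L_n(x,y) = Σ_{r=0}^n C(n,r) (-1)^r x^r y^{n-r} / r! is the two-variable Laguerre polynomial. -/
open Finset MeasureTheory

/-- Two-variable Laguerre polynomial. -/
noncomputable def laguerre2 (n : ℕ) (x y : ℝ) : ℝ :=
  ∑ r ∈ range (n + 1),
    (n.choose r : ℝ) * (-1) ^ r * x ^ r * y ^ (n - r) / (r.factorial : ℝ)

lemma integrable_exp_neg_mul_pow (r : ℕ) :
    IntegrableOn (fun t : ℝ => Real.exp (-t) * t ^ r) (Set.Ioi 0) := by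
  have h := Real.GammaIntegral_convergent (s := (r + 1 : ℝ)) (by positivity)
  refine h.congr_fun (fun t ht => ?_) measurableSet_Ioi
  rw [show ((r:ℝ) + 1 - 1) = (r : ℝ) by ring]; simp only [Real.rpow_natCast]

lemma integral_exp_neg_mul_pow (r : ℕ) :
    ∫ t in Set.Ioi (0:ℝ), Real.exp (-t) * t ^ r = (r.factorial : ℝ) := by
  have h := Real.Gamma_eq_integral (s := (r + 1 : ℝ)) (by positivity)
  have h2 : Real.Gamma ((r : ℝ) + 1) = r.factorial := by
    exact_mod_cast Real.Gamma_nat_eq_factorial r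
  rw [← h2, h]
  refine setIntegral_congr_fun measurableSet_Ioi (fun t ht => ?_)
  rw [show ((r:ℝ) + 1 - 1) = (r : ℝ) by ring, Real.rpow_natCast]

/-- (y - x)^n = ∫_0^∞ e^{-t} L_n(xt, y) dt. -/
theorem pow_sub_eq_integral_laguerre2 (n : ℕ) (x y : ℝ) :
    (y - x) ^ n = ∫ t in Set.Ioi (0 : ℝ), Real.exp (-t) * laguerre2 n (x * t) y := by
  have heq : ∀ t ∈ Set.Ioi (0:ℝ),
      Real.exp (-t) * laguerre2 n (x * t) y =
      ∑ r ∈ range (n + 1),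
        ((n.choose r : ℝ) * (-1) ^ r * x ^ r * y ^ (n - r) / (r.factorial : ℝ)) *
          (Real.exp (-t) * t ^ r) := by
    intro t _
    unfold laguerre2
    rw [Finset.mul_sum]
    refine Finset.sum_congr rfl fun r _ => ?_
    rw [mul_pow]
    ring
  rw [setIntegral_congr_fun measurableSet_Ioi heq, integral_finset_sum _
    (fun r _ => (integrable_exp_neg_mul_pow r).const_mul _)]
  have : ∀ r ∈ range (n + 1),
      (∫ t in Set.Ioi (0:ℝ),
        ((n.choose r : ℝ) * (-1) ^ r * x ^ r * y ^ (n - r) / (r.factorial : ℝ)) *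
          (Real.exp (-t) * t ^ r)) =
      (n.choose r : ℝ) * (-x) ^ r * y ^ (n - r) := by
    intro r _
    rw [integral_const_mul, integral_exp_neg_mul_pow]
    have hr : (r.factorial : ℝ) ≠ 0 := by positivity
    rw [div_mul_cancel₀ _ hr, neg_pow]
    ring
  rw [Finset.sum_congr rfl this]
  rw [sub_eq_add_neg, add_comm, add_pow]
  refine Finset.sum_congr rfl fun r _ => ?_
  ring
end

section
/- For real x, y, ξ with |ξ| < 1/(|y| + |x|), the exponential generating function Σ_{n=0}^∞ (ξ^n/n!) b_n(x,y) = C_0(xξ)/(1 - yξ), where b_n(x,y) = n! Σ_{r=0}^n (-1)^r x^r y^{n-r}/(r!)² are the truncated Bessel polynomials and C_0(x) = Σ_{r=0}^∞ (-x)^r/(r!)² is the 0-th order Tricomi function. -/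
open Finset

/-- Truncated Bessel polynomials. -/
noncomputable def besselTrunc (n : ℕ) (x y : ℝ) : ℝ :=
  (n.factorial : ℝ) * ∑ r ∈ range (n + 1),
    (-1 : ℝ) ^ r * x ^ r * y ^ (n - r) / (r.factorial : ℝ) ^ 2

/-- 0-th order Tricomi function. -/
noncomputable def tricomiC0 (x : ℝ) : ℝ := ∑' r : ℕ, (-x) ^ r / (r.factorial : ℝ) ^ 2

lemma tricomi_summable_norm (a : ℝ) :
    Summable fun r : ℕ => ‖(-a) ^ r / (r.factorial : ℝ) ^ 2‖ := by
  refine Summable.of_nonneg_of_le (fun r => norm_nonneg _) (fun r => ?_)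
    (Real.summable_pow_div_factorial |a|)
  have h1 : (0:ℝ) < (r.factorial : ℝ) := by positivity
  rw [norm_div, norm_pow, norm_neg, Real.norm_eq_abs, norm_pow, Real.norm_natCast]
  gcongr
  nlinarith [show (1:ℝ) ≤ (r.factorial : ℝ) by exact_mod_cast r.factorial_pos]

/-- Σ_n (ξ^n/n!) b_n(x,y) = C₀(xξ)/(1-yξ) for |ξ|(|y|+|x|) < 1. -/
theorem besselTrunc_gen_fun (x y ξ : ℝ) (h : |ξ| * (|y| + |x|) < 1) :
    ∑' n : ℕ, ξ ^ n / (n.factorial : ℝ) * besselTrunc n x y =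
      tricomiC0 (x * ξ) / (1 - y * ξ) := by
  have hyx : |y * ξ| < 1 := by
    rw [abs_mul]
    calc |y| * |ξ| ≤ |ξ| * (|y| + |x|) := by nlinarith [abs_nonneg x, abs_nonneg y, abs_nonneg ξ]
      _ < 1 := h
  set f : ℕ → ℝ := fun r => (-(x * ξ)) ^ r / (r.factorial : ℝ) ^ 2 with hf
  set g : ℕ → ℝ := fun k => (y * ξ) ^ k with hg
  have hfs : Summable fun r => ‖f r‖ := tricomi_summable_norm (x * ξ)
  have hgs : Summable fun k => ‖g k‖ := by
    simp only [hg, norm_pow]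
    exact summable_geometric_of_lt_one (abs_nonneg _) hyx
  have key := tsum_mul_tsum_eq_tsum_sum_range_of_summable_norm hfs hgs
  have hgt : ∑' k, g k = (1 - y * ξ)⁻¹ := tsum_geometric_of_abs_lt_one hyx
  have hterm : ∀ n : ℕ, ∑ k ∈ range (n + 1), f k * g (n - k)
      = ξ ^ n / (n.factorial : ℝ) * besselTrunc n x y := by
    intro n
    have hn : ((n.factorial : ℝ)) ≠ 0 := by positivity
    rw [besselTrunc, ← mul_assoc, div_mul_cancel₀ _ hn, Finset.mul_sum]
    apply Finset.sum_congr rfl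
    intro r hr
    have hrn : r ≤ n := Nat.lt_succ_iff.mp (Finset.mem_range.mp hr)
    have hxi : ξ ^ n = ξ ^ r * ξ ^ (n - r) := by
      rw [← pow_add]; congr 1; omega
    simp only [hf, hg]
    rw [neg_pow, mul_pow, mul_pow, hxi]
    ring
  rw [← tsum_congr hterm, ← key, hgt, div_eq_mul_inv]
  congr 1
end

section
/- The lacunary generating function of even-index two-variable Laguerre polynomials satisfies Σ_{n=0}^∞ ξ^n L_{2n}(x,y) = (1/2)[ (1/(1-√ξ y)) e^{-√ξ x/(1-√ξ y)} + (1/(1+√ξ y)) e^{√ξ x/(1+√ξ y)} ] for 0 < ξ and |y| < 1/√ξ (with ξ small enough for convergence). -/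
open Finset Real

lemma laguerre2_hasSum (x y t : ℝ) (h : |t| * (|x| + |y|) < 1) :
    HasSum (fun n => t ^ n * laguerre2 n x y)
      ((1 - t * y)⁻¹ * Real.exp (-(t * x) / (1 - t * y))) := by
  set a : ℝ := -(t * x) with ha
  set b : ℝ := t * y with hb
  have habs : |a| + |b| = |t| * (|x| + |y|) := by
    rw [ha, hb, abs_neg, abs_mul, abs_mul]; ring
  have hab : |a| + |b| < 1 := by rw [habs]; exact h
  have hbb : |b| < 1 := by
    have := abs_nonneg a; linarith
  have hb1 : (1 : ℝ) - b ≠ 0 := by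
    have := abs_lt.1 hbb; intro h0; linarith
  set F : ℕ × ℕ → ℝ := fun p =>
    a ^ p.1 / (p.1.factorial : ℝ) * (((p.2 + p.1).choose p.1 : ℝ) * b ^ p.2) with hF
  -- key bound
  have key : ∀ r m : ℕ, ((m + r).choose r : ℝ) * (|a| ^ r * |b| ^ m) ≤ (|a| + |b|) ^ (r + m) := by
    intro r m
    have h1 : (|a| + |b|) ^ (m + r) =
        ∑ k ∈ range (m + r + 1), |a| ^ k * |b| ^ (m + r - k) * ((m + r).choose k : ℝ) :=
      add_pow _ _ _
    rw [show r + m = m + r from add_comm r m, h1]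
    have hmem : r ∈ range (m + r + 1) := by simp [Finset.mem_range]
    have := Finset.single_le_sum
      (f := fun k => |a| ^ k * |b| ^ (m + r - k) * ((m + r).choose k : ℝ))
      (fun i _ => by positivity) hmem
    calc ((m + r).choose r : ℝ) * (|a| ^ r * |b| ^ m)
        = |a| ^ r * |b| ^ (m + r - r) * ((m + r).choose r : ℝ) := by
          rw [Nat.add_sub_cancel]; ring
      _ ≤ _ := this
  have hsumF : Summable F := by
    have hc0 : (0 : ℝ) ≤ |a| + |b| := by positivity
    have hgeo : Summable (fun n : ℕ => (|a| + |b|) ^ n) := summable_geometric_of_lt_one hc0 hab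
    have hprod : Summable (fun p : ℕ × ℕ => (|a| + |b|) ^ p.1 * (|a| + |b|) ^ p.2) :=
      hgeo.mul_of_nonneg hgeo (fun n => by positivity) (fun n => by positivity)
    apply Summable.of_norm_bounded hprod
    rintro ⟨r, m⟩
    have hfac : (1 : ℝ) ≤ (r.factorial : ℝ) := by
      exact_mod_cast Nat.one_le_iff_ne_zero.mpr r.factorial_ne_zero
    have h0 : ‖F (r, m)‖ = |a| ^ r / (r.factorial : ℝ) * (((m + r).choose r : ℝ) * |b| ^ m) := by
      simp [hF, abs_mul, abs_div, abs_pow, Nat.abs_cast]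
    rw [h0]
    have h1 : |a| ^ r / (r.factorial : ℝ) * (((m + r).choose r : ℝ) * |b| ^ m) ≤
        ((m + r).choose r : ℝ) * (|a| ^ r * |b| ^ m) := by
      have h2 : |a| ^ r / (r.factorial : ℝ) ≤ |a| ^ r := by
        apply div_le_self (by positivity) hfac
      calc |a| ^ r / (r.factorial : ℝ) * (((m + r).choose r : ℝ) * |b| ^ m)
          ≤ |a| ^ r * (((m + r).choose r : ℝ) * |b| ^ m) := by
            apply mul_le_mul_of_nonneg_right h2 (by positivity)
        _ = ((m + r).choose r : ℝ) * (|a| ^ r * |b| ^ m) := by ring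
    calc |a| ^ r / (r.factorial : ℝ) * (((m + r).choose r : ℝ) * |b| ^ m)
        ≤ ((m + r).choose r : ℝ) * (|a| ^ r * |b| ^ m) := h1
      _ ≤ (|a| + |b|) ^ (r + m) := key r m
      _ = (|a| + |b|) ^ r * (|a| + |b|) ^ m := pow_add _ _ _
  have hFsum : HasSum F (∑' p, F p) := hsumF.hasSum
  set S := ∑' p, F p with hSdef
  -- row sums
  have hfib : ∀ r : ℕ, HasSum (fun m => F (r, m))
      (a ^ r / (r.factorial : ℝ) * (1 / (1 - b) ^ (r + 1))) := by
    intro r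
    have := (hasSum_choose_mul_geometric_of_norm_lt_one (𝕜 := ℝ) r (r := b)
      (by rwa [Real.norm_eq_abs])).mul_left (a ^ r / (r.factorial : ℝ))
    exact this
  have hrow : HasSum (fun r => a ^ r / (r.factorial : ℝ) * (1 / (1 - b) ^ (r + 1))) S :=
    hFsum.prod_fiberwise hfib
  have hexp : HasSum (fun r => a ^ r / (r.factorial : ℝ) * (1 / (1 - b) ^ (r + 1)))
      ((1 - b)⁻¹ * Real.exp (a / (1 - b))) := by
    have h0 := (NormedSpace.expSeries_div_hasSum_exp (𝔸 := ℝ) (a / (1 - b))).mul_left (1 - b)⁻¹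
    rw [← Real.exp_eq_exp_ℝ] at h0
    convert h0 using 2 with r
    · rfl
    rw [div_pow]
    rw [pow_succ, one_div, mul_inv]
    field_simp
  have hS : S = (1 - b)⁻¹ * Real.exp (a / (1 - b)) := hrow.unique hexp
  -- regroup by antidiagonals
  have hFe : HasSum (F ∘ Finset.HasAntidiagonal.sigmaAntidiagonalEquivProd) S :=
    (Equiv.hasSum_iff _).2 hFsum
  have hmain : HasSum (fun n => t ^ n * laguerre2 n x y) S := by
    apply hFe.sigma
    intro n
    have hfin := hasSum_fintype (fun c : (Finset.HasAntidiagonal.antidiagonal n : Finset (ℕ × ℕ)) => F c)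
    convert hfin using 1
    · rfl
    rw [Finset.sum_coe_sort _ F, Finset.Nat.sum_antidiagonal_eq_sum_range_succ_mk]
    unfold laguerre2
    rw [Finset.mul_sum]
    apply Finset.sum_congr rfl
    intro i hi
    symm
    have hi' : i ≤ n := by simp [Finset.mem_range] at hi; omega
    have hsub : n - i + i = n := by omega
    have hA : a ^ i = (-1 : ℝ) ^ i * t ^ i * x ^ i := by
      rw [ha, neg_pow, mul_pow]; ring
    have hB : b ^ (n - i) = t ^ (n - i) * y ^ (n - i) := by rw [hb, mul_pow]
    have ht : t ^ i * t ^ (n - i) = t ^ n := by rw [← pow_add]; congr 1; omega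
    show a ^ i / (i.factorial : ℝ) * (((n - i + i).choose i : ℝ) * b ^ (n - i)) = _
    rw [hsub, hA, hB, ← ht]
    ring
  rw [hS] at hmain
  exact hmain

/-- lacunary generating function of even-index Laguerre polynomials. -/
theorem laguerre2_lacunary_gen_fun (x y ξ : ℝ) (hξ : 0 < ξ)
    (hy : |y| < 1 / Real.sqrt ξ) (hconv : Real.sqrt ξ * (|y| + |x|) < 1) :
    ∑' n : ℕ, ξ ^ n * laguerre2 (2 * n) x y =
      (1 / 2) * ((1 / (1 - Real.sqrt ξ * y)) *
          Real.exp (-(Real.sqrt ξ * x) / (1 - Real.sqrt ξ * y)) +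
        (1 / (1 + Real.sqrt ξ * y)) *
          Real.exp ((Real.sqrt ξ * x) / (1 + Real.sqrt ξ * y))) := by
  set s : ℝ := Real.sqrt ξ with hs
  have hs0 : 0 ≤ s := Real.sqrt_nonneg ξ
  have hs2 : s ^ 2 = ξ := Real.sq_sqrt hξ.le
  have hlt : |s| * (|x| + |y|) < 1 := by
    rw [abs_of_nonneg hs0, add_comm]; exact hconv
  have h1 := laguerre2_hasSum x y s hlt
  have h2 := laguerre2_hasSum x y (-s) (by rwa [abs_neg])
  simp only [neg_mul, sub_neg_eq_add, neg_neg] at h2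
  have h3 := (h1.add h2).div_const 2
  have hzero : ∀ n ∉ Set.range (fun k : ℕ => 2 * k),
      (s ^ n * laguerre2 n x y + (-s) ^ n * laguerre2 n x y) / 2 = 0 := by
    intro n hn
    have hodd : Odd n := by
      rcases Nat.even_or_odd n with he | ho
      · obtain ⟨k, hk⟩ := he
        exact absurd ⟨k, show 2 * k = n by omega⟩ hn
      · exact ho
    rw [hodd.neg_pow]
    ring
  have hinj : Function.Injective (fun k : ℕ => 2 * k) := fun a b hab => by
    simpa using hab
  have h4 := (Function.Injective.hasSum_iff hinj hzero).2 h3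
  have h5 : HasSum (fun n : ℕ => ξ ^ n * laguerre2 (2 * n) x y)
      (((1 - s * y)⁻¹ * Real.exp (-(s * x) / (1 - s * y)) +
        (1 + s * y)⁻¹ * Real.exp (s * x / (1 + s * y))) / 2) := by
    convert h4 using 2 with n
    have heven : ((-s) : ℝ) ^ (2 * n) = s ^ (2 * n) := by
      rw [neg_pow, pow_mul]; simp
    have hpow : s ^ (2 * n) = ξ ^ n := by
      rw [pow_mul, hs2]
    show ξ ^ n * laguerre2 (2 * n) x y = _
    simp only [Function.comp]
    rw [heven, hpow]
    ring
  rw [h5.tsum_eq]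
  ring
end

section
/- For all natural m, n and real a, b, c, x: d^m/dx^m (a x² + b x + c)^n = m! Σ_{r=0}^{⌊m/2⌋} (2ax+b)^{m-2r} a^r / ((m-2r)! r!) · n!/(n-m+r)! · (a x² + b x + c)^{n-m+r}, where terms with n - m + r < 0 are taken to be zero (i.e., the factor n!/(n-m+r)! is the falling factorial n(n-1)⋯(n-m+r+1), which vanishes when m - r > n). -/
open Finset

private noncomputable def Sterm (m n : ℕ) (u v p : ℝ) (r : ℕ) : ℝ :=
  u ^ (m - 2 * r) * v ^ r / ((m - 2 * r).factorial * r.factorial) *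
    (n.descFactorial (m - r) : ℝ) * p ^ (n - (m - r))

private noncomputable def Aterm (m n : ℕ) (u v p : ℝ) (r : ℕ) : ℝ :=
  ((m - 2 * r : ℕ) : ℝ) * 2 * u ^ (m - 2 * r - 1) * v ^ (r + 1) /
      ((m - 2 * r).factorial * r.factorial) *
    (n.descFactorial (m - r) : ℝ) * p ^ (n - (m - r))

private noncomputable def Bterm (m n : ℕ) (u v p : ℝ) (r : ℕ) : ℝ :=
  u ^ (m + 1 - 2 * r) * v ^ r / ((m - 2 * r).factorial * r.factorial) *
    (n.descFactorial (m + 1 - r) : ℝ) * p ^ (n - (m + 1 - r))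

private lemma key0 (m n : ℕ) (u v p : ℝ) :
    ((m + 1).factorial : ℝ) * Sterm (m + 1) n u v p 0 =
      (m.factorial : ℝ) * Bterm m n u v p 0 := by
  simp only [Sterm, Bterm, Nat.mul_zero, Nat.sub_zero, pow_zero, Nat.factorial_zero]
  have hm : (m.factorial : ℝ) ≠ 0 := by
    exact_mod_cast m.factorial_ne_zero
  have hm1 : ((m + 1).factorial : ℝ) ≠ 0 := by
    exact_mod_cast (m + 1).factorial_ne_zero
  field_simp

private lemma key2 (m n s : ℕ) (u v p : ℝ) (hs : 2 * s + 2 ≤ m) :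
    ((m + 1).factorial : ℝ) * Sterm (m + 1) n u v p (s + 1) =
      (m.factorial : ℝ) * (Aterm m n u v p s + Bterm m n u v p (s + 1)) := by
  obtain ⟨j, rfl⟩ : ∃ j, m = 2 * s + 2 + j := ⟨m - (2 * s + 2), by omega⟩
  simp only [Sterm, Aterm, Bterm]
  rw [show 2 * s + 2 + j + 1 - 2 * (s + 1) = j + 1 from by omega,
      show 2 * s + 2 + j + 1 - (s + 1) = s + j + 2 from by omega,
      show 2 * s + 2 + j - 2 * s = j + 2 from by omega,

      show 2 * s + 2 + j - s = s + j + 2 from by omega,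
      show j + 2 - 1 = j + 1 from by omega,
      show 2 * s + 2 + j - 2 * (s + 1) = j from by omega]
  have f1 : ((2 * s + 2 + j + 1).factorial : ℝ) = (2 * s + 2 + j + 1) * (2 * s + 2 + j).factorial := by
    exact_mod_cast Nat.factorial_succ _
  have f2 : ((j + 2).factorial : ℝ) = (j + 2) * ((j + 1) * j.factorial) := by
    rw [show j + 2 = (j + 1) + 1 from rfl, Nat.factorial_succ, Nat.factorial_succ]
    push_cast; ring
  have f3 : ((j + 1).factorial : ℝ) = (j + 1) * j.factorial := by
    exact_mod_cast Nat.factorial_succ _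
  have f4 : ((s + 1).factorial : ℝ) = (s + 1) * s.factorial := by
    exact_mod_cast Nat.factorial_succ _
  rw [f1, f2, f3, f4]
  have hj : (j.factorial : ℝ) ≠ 0 := by exact_mod_cast j.factorial_ne_zero
  have hsf : (s.factorial : ℝ) ≠ 0 := by exact_mod_cast s.factorial_ne_zero
  have hj1 : (j : ℝ) + 1 ≠ 0 := by positivity
  have hj2 : (j : ℝ) + 2 ≠ 0 := by positivity
  have hs1 : (s : ℝ) + 1 ≠ 0 := by positivity
  field_simp
  push_cast
  ring

private lemma key3 (h n : ℕ) (u v p : ℝ) :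
    ((2 * h + 2).factorial : ℝ) * Sterm (2 * h + 2) n u v p (h + 1) =
      ((2 * h + 1).factorial : ℝ) * Aterm (2 * h + 1) n u v p h := by
  simp only [Sterm, Aterm]
  rw [show 2 * h + 2 - 2 * (h + 1) = 0 from by omega,
      show 2 * h + 2 - (h + 1) = h + 1 from by omega,
      show 2 * h + 1 - 2 * h = 1 from by omega,

      show 2 * h + 1 - h = h + 1 from by omega,
      show 1 - 1 = 0 from rfl]
  have f1 : ((2 * h + 2).factorial : ℝ) = (2 * h + 2) * (2 * h + 1).factorial := by
    exact_mod_cast Nat.factorial_succ _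
  have f4 : ((h + 1).factorial : ℝ) = (h + 1) * h.factorial := by
    exact_mod_cast Nat.factorial_succ _
  rw [f1, f4]
  have hh : (h.factorial : ℝ) ≠ 0 := by exact_mod_cast h.factorial_ne_zero
  have hh1 : (h : ℝ) + 1 ≠ 0 := by positivity
  simp only [Nat.factorial_zero, Nat.factorial_one, pow_zero]
  field_simp
  ring

private lemma step_sum (m n : ℕ) (u v p : ℝ) :
    ((m + 1).factorial : ℝ) * ∑ s ∈ range ((m + 1) / 2 + 1), Sterm (m + 1) n u v p s =
      (m.factorial : ℝ) * ∑ r ∈ range (m / 2 + 1), (Aterm m n u v p r + Bterm m n u v p r) := by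
  rcases Nat.even_or_odd' m with ⟨h, hm | hm⟩
  · subst hm
    rw [show (2 * h + 1) / 2 + 1 = h + 1 from by omega,
        show 2 * h / 2 + 1 = h + 1 from by omega]
    rw [Finset.sum_add_distrib, Finset.sum_range_succ (fun r => Aterm (2 * h) n u v p r),
        Finset.sum_range_succ' (fun r => Bterm (2 * h) n u v p r),
        Finset.sum_range_succ' (fun s => Sterm (2 * h + 1) n u v p s)]
    have hA : Aterm (2 * h) n u v p h = 0 := by simp [Aterm]
    have h1 : ((2 * h + 1).factorial : ℝ) * ∑ s ∈ range h, Sterm (2 * h + 1) n u v p (s + 1) =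
        (2 * h).factorial * ∑ s ∈ range h, (Aterm (2 * h) n u v p s + Bterm (2 * h) n u v p (s + 1)) := by
      rw [Finset.mul_sum, Finset.mul_sum]
      refine Finset.sum_congr rfl fun s hs => ?_
      have := key2 (2 * h) n s u v p (by simp at hs; omega)
      simpa using this
    rw [Finset.sum_add_distrib] at h1
    have h0 := key0 (2 * h) n u v p
    simp only [mul_add, hA, add_zero]
    linarith [h0, h1]
  · subst hm
    rw [show (2 * h + 1 + 1) / 2 + 1 = h + 2 from by omega,
        show (2 * h + 1) / 2 + 1 = h + 1 from by omega]
    rw [Finset.sum_add_distrib, Finset.sum_range_succ (fun r => Aterm (2 * h + 1) n u v p r),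
        Finset.sum_range_succ' (fun r => Bterm (2 * h + 1) n u v p r),
        Finset.sum_range_succ' (fun s => Sterm (2 * h + 1 + 1) n u v p s),
        Finset.sum_range_succ (fun s => Sterm (2 * h + 1 + 1) n u v p (s + 1))]
    have h1 : ((2 * h + 1 + 1).factorial : ℝ) * ∑ s ∈ range h, Sterm (2 * h + 1 + 1) n u v p (s + 1) =
        (2 * h + 1).factorial * ∑ s ∈ range h, (Aterm (2 * h + 1) n u v p s + Bterm (2 * h + 1) n u v p (s + 1)) := by
      rw [Finset.mul_sum, Finset.mul_sum]
      refine Finset.sum_congr rfl fun s hs => ?_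
      have := key2 (2 * h + 1) n s u v p (by simp at hs; omega)
      simpa using this
    rw [Finset.sum_add_distrib] at h1
    have h0 := key0 (2 * h + 1) n u v p
    have h3 : ((2 * h + 1 + 1).factorial : ℝ) * Sterm (2 * h + 1 + 1) n u v p (h + 1) =
        ((2 * h + 1).factorial : ℝ) * Aterm (2 * h + 1) n u v p h := by
      have := key3 h n u v p
      simpa [show 2 * h + 2 = 2 * h + 1 + 1 from by omega] using this
    simp only [mul_add]
    linarith [h0, h1, h3]

/-- m-th derivative of (ax²+bx+c)^n in closed form, where n!/(n-m+r)! is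
the descending factorial (zero when m - r > n) and the corresponding power is then irrelevant. -/
theorem iteratedDeriv_pow_trinomial (m n : ℕ) (a b c x : ℝ) :
    iteratedDeriv m (fun t : ℝ => (a * t ^ 2 + b * t + c) ^ n) x =
      (m.factorial : ℝ) * ∑ r ∈ range (m / 2 + 1),
        (2 * a * x + b) ^ (m - 2 * r) * a ^ r /
            ((m - 2 * r).factorial * r.factorial) *
          (n.descFactorial (m - r) : ℝ) *
          (a * x ^ 2 + b * x + c) ^ (n - (m - r)) := by
  induction m generalizing x with
  | zero => simp
  | succ m ih =>
    rw [iteratedDeriv_succ]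
    rw [show iteratedDeriv m (fun t : ℝ => (a * t ^ 2 + b * t + c) ^ n) =
        (fun y : ℝ => (m.factorial : ℝ) * ∑ r ∈ range (m / 2 + 1),
          (2 * a * y + b) ^ (m - 2 * r) * a ^ r /
              ((m - 2 * r).factorial * r.factorial) *
            (n.descFactorial (m - r) : ℝ) *
            (a * y ^ 2 + b * y + c) ^ (n - (m - r))) from funext ih]
    have hlin : HasDerivAt (fun y : ℝ => 2 * a * y + b) (2 * a) x := by
      simpa using ((hasDerivAt_id x).const_mul (2 * a)).add_const b
    have hq : HasDerivAt (fun y : ℝ => a * y ^ 2 + b * y + c) (2 * a * x + b) x := by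
      have h1 : HasDerivAt (fun y : ℝ => a * y ^ 2) (a * (2 * x)) x := by
        simpa using (hasDerivAt_pow 2 x).const_mul a
      have h2 : HasDerivAt (fun y : ℝ => b * y) b x := by
        simpa using (hasDerivAt_id x).const_mul b
      have : HasDerivAt (fun y : ℝ => a * y ^ 2 + b * y + c) (a * (2 * x) + b) x :=
        (h1.add h2).add_const c
      convert this using 1
      ring
    have hterm : ∀ r : ℕ, HasDerivAt (fun y : ℝ =>
        (2 * a * y + b) ^ (m - 2 * r) * a ^ r /
            ((m - 2 * r).factorial * r.factorial) *
          (n.descFactorial (m - r) : ℝ) *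
          (a * y ^ 2 + b * y + c) ^ (n - (m - r)))
        ((((m - 2 * r : ℕ) : ℝ) * (2 * a * x + b) ^ (m - 2 * r - 1) * (2 * a) * a ^ r /
            ((m - 2 * r).factorial * r.factorial) *
          (n.descFactorial (m - r) : ℝ)) *
          (a * x ^ 2 + b * x + c) ^ (n - (m - r)) +
          ((2 * a * x + b) ^ (m - 2 * r) * a ^ r /
            ((m - 2 * r).factorial * r.factorial) *
          (n.descFactorial (m - r) : ℝ)) *
          (((n - (m - r) : ℕ) : ℝ) * (a * x ^ 2 + b * x + c) ^ (n - (m - r) - 1) *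
            (2 * a * x + b))) x := by
      intro r
      exact ((((hlin.pow (m - 2 * r)).mul_const (a ^ r)).div_const
        (((m - 2 * r).factorial : ℝ) * r.factorial)).mul_const
        ((n.descFactorial (m - r) : ℝ))).mul (hq.pow (n - (m - r)))
    have htot := (HasDerivAt.fun_sum (fun r (_ : r ∈ range (m / 2 + 1)) => hterm r)).const_mul
      (m.factorial : ℝ)
    rw [htot.deriv]
    have hrhs : ((m + 1).factorial : ℝ) * ∑ r ∈ range ((m + 1) / 2 + 1),
        (2 * a * x + b) ^ (m + 1 - 2 * r) * a ^ r /
            ((m + 1 - 2 * r).factorial * r.factorial) *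
          (n.descFactorial (m + 1 - r) : ℝ) *
          (a * x ^ 2 + b * x + c) ^ (n - (m + 1 - r)) =
        ((m + 1).factorial : ℝ) * ∑ s ∈ range ((m + 1) / 2 + 1),
          Sterm (m + 1) n (2 * a * x + b) a (a * x ^ 2 + b * x + c) s := by
      simp only [Sterm]
    rw [hrhs, step_sum m n (2 * a * x + b) a (a * x ^ 2 + b * x + c)]
    congr 1
    refine Finset.sum_congr rfl fun r hr => ?_
    have hr' : r ≤ m / 2 := by simpa [Nat.lt_succ_iff] using hr
    have h2r : 2 * r ≤ m := by omega
    simp only [Aterm, Bterm]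
    rw [show m + 1 - r = (m - r) + 1 from by omega, Nat.descFactorial_succ,
        show n - ((m - r) + 1) = n - (m - r) - 1 from by omega,
        show m + 1 - 2 * r = (m - 2 * r) + 1 from by omega, pow_succ]
    push_cast
    ring
end
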